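/- Let G be a finite connected simple graph with n ≥ 2 vertices and m edges, and let h ≥ 1 be an integer. If m ≤ 3(n + 2h − 2) and n > 24(h − 1), then the bondage number satisfies b(G) ≤ 11. -/

import Mathlib

/-- A finset `D` of vertices is a dominating set of `G` if every vertex not in `D`
is adjacent to some vertex in `D`. -/
def SimpleGraph.IsDominatingSet {V : Type*} (G : SimpleGraph V) (D : Finset V) : Prop :=
  ∀ v : V, v ∉ D → ∃ u ∈ D, G.Adj u v

/-- The domination number of `G`: the minimum cardinality of a dominating set. -/
noncomputable def SimpleGraph.dominationNumber {V : Type*} [Fintype V]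
    (G : SimpleGraph V) : ℕ :=
  sInf {k | ∃ D : Finset V, G.IsDominatingSet D ∧ D.card = k}

/-- The bondage number of `G`: the minimum cardinality of a set `B` of edges of `G`
whose removal increases the domination number. -/
noncomputable def SimpleGraph.bondageNumber {V : Type*} [Fintype V]
    (G : SimpleGraph V) : ℕ :=
  sInf {k | ∃ B : Finset (Sym2 V), ↑B ⊆ G.edgeSet ∧ B.card = k ∧
    G.dominationNumber < (G.deleteEdges ↑B).dominationNumber}

/-!
Hartnell and Rall: if `u ≠ v` are at distance at most two, deleting all edges at `u` and `v`
except one edge `vw` to a common neighbour (none if `u` and `v` are adjacent) raises the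
domination number, so `b(G) ≤ deg u + deg v - 1`. It therefore suffices to find such a pair
with `deg u + deg v ≤ 12`. If there is none, let `L` and `H` be the sets of vertices of degree
`≤ 6` and `≥ 7`. The vertices of `L` have pairwise disjoint nonempty neighbourhoods inside `H`,
so `|L| ≤ |H|`, and counting degrees gives `2m ≥ 6n + |H|`. With `m ≤ 3(n + 2h - 2)` this forces
`|H| ≤ 12(h - 1)`, hence `n ≤ 2|H| ≤ 24(h - 1)`.
-/

namespace SimpleGraph

open Finset

variable {V : Type*} [Fintype V] {G : SimpleGraph V}

variable (G) in
theorem exists_isDominatingSet_card_eq_dominationNumber :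
    ∃ D : Finset V, G.IsDominatingSet D ∧ #D = G.dominationNumber :=
  Nat.sInf_mem (s := {k | ∃ D : Finset V, G.IsDominatingSet D ∧ #D = k})
    ⟨#(univ : Finset V), univ, fun v hv => absurd (mem_univ v) hv, rfl⟩

theorem IsDominatingSet.dominationNumber_le_card {D : Finset V} (hD : G.IsDominatingSet D) :
    G.dominationNumber ≤ #D :=
  Nat.sInf_le ⟨D, hD, rfl⟩

theorem bondageNumber_le_card {B : Finset (Sym2 V)} (hB : ↑B ⊆ G.edgeSet)
    (hlt : G.dominationNumber < (G.deleteEdges ↑B).dominationNumber) :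
    G.bondageNumber ≤ #B :=
  Nat.sInf_le ⟨B, hB, rfl, hlt⟩

section DecidableEq

variable [DecidableEq V]

/-- A minimum dominating set of `G'` contains `u` and one of `v`, `w`; replacing these by `w`
gives a smaller dominating set of `G`. -/
theorem dominationNumber_lt_of_le {G' : SimpleGraph V} (hle : G' ≤ G) {u v w : V} (huv : u ≠ v)
    (huw : G.Adj u w) (hvw : G.Adj v w ∨ v = w) (hu : ∀ x, ¬G'.Adj x u)
    (hv : ∀ x, G'.Adj x v → x = w) :
    G.dominationNumber < G'.dominationNumber := by
  obtain ⟨D, hD, hcard⟩ := G'.exists_isDominatingSet_card_eq_dominationNumber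
  have huD : u ∈ D := by
    by_contra h
    obtain ⟨x, -, hx⟩ := hD u h
    exact hu x hx
  have hvwD : v ∈ D ∨ w ∈ D := by
    by_contra! h
    obtain ⟨x, hxD, hx⟩ := hD v h.1
    exact h.2 (hv x hx ▸ hxD)
  set D' := insert w ((D.erase u).erase v)
  have hwD' : w ∈ D' := mem_insert_self _ _
  have hdom : G.IsDominatingSet D' := by
    intro t ht
    have htw : t ≠ w := by rintro rfl; exact ht hwD'
    by_cases htu : t = u
    · exact ⟨w, hwD', htu ▸ huw.symm⟩
    by_cases htv : t = v
    · subst htv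
      exact ⟨w, hwD', (hvw.resolve_right htw).symm⟩
    have htD : t ∉ D := fun htD => ht (mem_insert_of_mem (mem_erase.2 ⟨htv, mem_erase.2 ⟨htu, htD⟩⟩))
    obtain ⟨x, hxD, hx⟩ := hD t htD
    have hxu : x ≠ u := by rintro rfl; exact hu t hx.symm
    have hxv : x ≠ v := by rintro rfl; exact htw (hv t hx.symm)
    exact ⟨x, mem_insert_of_mem (mem_erase.2 ⟨hxv, mem_erase.2 ⟨hxu, hxD⟩⟩), hle hx⟩
  have hlt : #D' < #D := by
    rcases hvwD with hvD | hwD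
    · have h2 : 2 ≤ #D := one_lt_card.2 ⟨u, huD, v, hvD, huv⟩
      have : #D' ≤ #((D.erase u).erase v) + 1 := card_insert_le _ _
      rw [card_erase_of_mem (mem_erase.2 ⟨huv.symm, hvD⟩), card_erase_of_mem huD] at this
      omega
    · calc #D' ≤ #(D.erase u) :=
            card_le_card (insert_subset (mem_erase.2 ⟨huw.ne', hwD⟩) (erase_subset _ _))
        _ < #D := card_erase_lt_of_mem huD
  calc G.dominationNumber ≤ #D' := hdom.dominationNumber_le_card
    _ < #D := hlt
    _ = G'.dominationNumber := hcard

theorem bondageNumber_le_degree_add_degree_sub_one [DecidableRel G.Adj] {u v w : V}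
    (huv : u ≠ v) (huw : G.Adj u w) (hvw : G.Adj v w ∨ v = w) :
    G.bondageNumber ≤ G.degree u + G.degree v - 1 := by
  set B := (G.incidenceFinset u ∪ G.incidenceFinset v).erase s(v, w)
  have hB : ↑B ⊆ G.edgeSet := by
    intro e he
    simp only [B, coe_erase, coe_union, coe_incidenceFinset, Set.mem_sdiff, Set.mem_union] at he
    exact he.1.elim (fun h => G.incidenceSet_subset u h) (fun h => G.incidenceSet_subset v h)
  have hcard : #B + 1 ≤ G.degree u + G.degree v := by
    rw [← card_incidenceFinset_eq_degree, ← card_incidenceFinset_eq_degree]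
    have : #B ≤ #(G.incidenceFinset u ∪ G.incidenceFinset v) := card_erase_le
    rcases hvw with hvw | rfl
    · have hmem : s(v, w) ∈ G.incidenceFinset u ∪ G.incidenceFinset v :=
        mem_union_right _ ((G.mem_incidenceFinset _ _).2 (G.mk'_mem_incidenceSet_left_iff.2 hvw))
      have := card_union_le (G.incidenceFinset u) (G.incidenceFinset v)
      rw [card_erase_of_mem hmem]
      have := card_pos.2 ⟨_, hmem⟩
      omega
    · have hmem : s(u, v) ∈ G.incidenceFinset u ∩ G.incidenceFinset v := by
        simp [mem_incidenceFinset, G.mk'_mem_incidenceSet_left_iff.2 huw,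
          G.mk'_mem_incidenceSet_right_iff.2 huw]
      have := card_union_add_card_inter (G.incidenceFinset u) (G.incidenceFinset v)
      have := card_pos.2 ⟨_, hmem⟩
      omega
  have hu : ∀ x, ¬(G.deleteEdges ↑B).Adj x u := by
    intro x hx
    obtain ⟨hxu, hxB⟩ := deleteEdges_adj.1 hx
    refine hxB (mem_erase.2 ⟨fun h => ?_, mem_union_left _ ?_⟩)
    · have : u ∈ s(v, w) := h ▸ Sym2.mem_mk_right x u
      exact (Sym2.mem_iff.1 this).elim huv huw.ne
    · exact (G.mem_incidenceFinset _ _).2 (G.mk'_mem_incidenceSet_right_iff.2 hxu)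
  have hv : ∀ x, (G.deleteEdges ↑B).Adj x v → x = w := by
    intro x hx
    obtain ⟨hxv, hxB⟩ := deleteEdges_adj.1 hx
    by_contra hxw
    refine hxB (mem_erase.2 ⟨fun h => hxw ?_, mem_union_right _ ?_⟩)
    · exact Sym2.congr_right.1 (Sym2.eq_swap.symm.trans h)
    · exact (G.mem_incidenceFinset _ _).2 (G.mk'_mem_incidenceSet_right_iff.2 hxv)
  have := bondageNumber_le_card hB
    (dominationNumber_lt_of_le (G.deleteEdges_le _) huv huw hvw hu hv)
  omega

end DecidableEq

section DegreeSum

variable [DecidableRel G.Adj]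

variable (G) in
def lowDegreeVertices (k : ℕ) : Finset V := {v | G.degree v ≤ k}

variable (G) in
def highDegreeVertices (k : ℕ) : Finset V := {v | k < G.degree v}

theorem sum_lowDegreeVertices_add_sum_highDegreeVertices {M : Type*} [AddCommMonoid M]
    (k : ℕ) (f : V → M) :
    ∑ v ∈ G.lowDegreeVertices k, f v + ∑ v ∈ G.highDegreeVertices k, f v = ∑ v, f v := by
  simp only [lowDegreeVertices, highDegreeVertices, ← not_le]
  exact sum_filter_add_sum_filter_not _ _ _

theorem card_lowDegreeVertices_add_card_highDegreeVertices (k : ℕ) :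
    #(G.lowDegreeVertices k) + #(G.highDegreeVertices k) = Fintype.card V := by
  rw [← card_univ]
  simpa only [card_eq_sum_ones] using
    sum_lowDegreeVertices_add_sum_highDegreeVertices (G := G) k fun _ => 1

variable {k : ℕ}

theorem neighborFinset_subset_highDegreeVertices
    (hsum : ∀ u v w, u ≠ v → G.Adj u w → (G.Adj v w ∨ v = w) → 2 * k < G.degree u + G.degree v)
    {a : V} (ha : a ∈ G.lowDegreeVertices k) :
    G.neighborFinset a ⊆ G.highDegreeVertices k := by
  intro x hx
  rw [mem_neighborFinset] at hx
  have := hsum a x x hx.ne hx (Or.inr rfl)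
  simp only [lowDegreeVertices, highDegreeVertices, mem_filter, mem_univ, true_and] at ha ⊢
  omega

theorem pairwiseDisjoint_neighborFinset_lowDegreeVertices
    (hsum : ∀ u v w, u ≠ v → G.Adj u w → (G.Adj v w ∨ v = w) → 2 * k < G.degree u + G.degree v) :
    (G.lowDegreeVertices k : Set V).PairwiseDisjoint fun a => G.neighborFinset a := by
  intro a ha a' ha' hne
  rw [Function.onFun, Finset.disjoint_left]
  intro x hx hx'
  rw [mem_neighborFinset] at hx hx'
  have := hsum a a' x hne hx (Or.inl hx')
  simp only [lowDegreeVertices, mem_coe, mem_filter, mem_univ, true_and] at ha ha'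
  omega

theorem card_biUnion_neighborFinset_lowDegreeVertices [DecidableEq V]
    (hsum : ∀ u v w, u ≠ v → G.Adj u w → (G.Adj v w ∨ v = w) → 2 * k < G.degree u + G.degree v) :
    #((G.lowDegreeVertices k).biUnion fun a => G.neighborFinset a) =
      ∑ a ∈ G.lowDegreeVertices k, G.degree a := by
  rw [card_biUnion (pairwiseDisjoint_neighborFinset_lowDegreeVertices hsum)]
  exact sum_congr rfl fun a _ => card_neighborFinset_eq_degree G a

/-- Each neighbour has degree at least `2k + 1 - d` where `d = deg a`, and
`d * (2k + 1 - d) ≥ k * (d + 1)` because `(d - 1) * (k - d) ≥ 0`. -/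
theorem mul_degree_add_one_le_sum_degree_neighborFinset
    (hsum : ∀ u v w, u ≠ v → G.Adj u w → (G.Adj v w ∨ v = w) → 2 * k < G.degree u + G.degree v)
    {a : V} (hpos : 0 < G.degree a) (ha : a ∈ G.lowDegreeVertices k) :
    k * (G.degree a + 1) ≤ ∑ x ∈ G.neighborFinset a, G.degree x := by
  have hle : G.degree a ≤ k := by
    simpa only [lowDegreeVertices, mem_filter, mem_univ, true_and] using ha
  have hnbr : ∑ x ∈ G.neighborFinset a, (2 * k + 1) ≤
      ∑ x ∈ G.neighborFinset a, (G.degree a + G.degree x) :=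
    sum_le_sum fun x hx => hsum a x x ((mem_neighborFinset _ _ _).1 hx).ne
      ((mem_neighborFinset _ _ _).1 hx) (Or.inr rfl)
  rw [sum_const, sum_add_distrib, sum_const, card_neighborFinset_eq_degree, smul_eq_mul,
    smul_eq_mul] at hnbr
  nlinarith

theorem card_lowDegreeVertices_le_card_highDegreeVertices [DecidableEq V]
    (hdeg : ∀ v, 0 < G.degree v)
    (hsum : ∀ u v w, u ≠ v → G.Adj u w → (G.Adj v w ∨ v = w) → 2 * k < G.degree u + G.degree v) :
    #(G.lowDegreeVertices k) ≤ #(G.highDegreeVertices k) :=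
  calc #(G.lowDegreeVertices k) ≤ ∑ a ∈ G.lowDegreeVertices k, G.degree a := by
        simpa only [smul_eq_mul, mul_one] using
          card_nsmul_le_sum (G.lowDegreeVertices k) (fun a => G.degree a) 1 fun a _ => hdeg a
    _ = #((G.lowDegreeVertices k).biUnion fun a => G.neighborFinset a) :=
        (card_biUnion_neighborFinset_lowDegreeVertices hsum).symm
    _ ≤ #(G.highDegreeVertices k) :=
        card_le_card (biUnion_subset.2 fun a ha => neighborFinset_subset_highDegreeVertices hsum ha)

/-- In `2m = ∑ deg`, a low vertex `a` together with its private high neighbours contributes at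
least `deg a + k * (deg a + 1)`, and every other high vertex at least `k + 1`. -/
theorem mul_card_add_card_highDegreeVertices_le [DecidableEq V]
    (hdeg : ∀ v, 0 < G.degree v)
    (hsum : ∀ u v w, u ≠ v → G.Adj u w → (G.Adj v w ∨ v = w) → 2 * k < G.degree u + G.degree v) :
    k * Fintype.card V + #(G.highDegreeVertices k) ≤ 2 * #G.edgeFinset := by
  set L := G.lowDegreeVertices k
  set H := G.highDegreeVertices k
  set T := L.biUnion fun a => G.neighborFinset a
  have hdisj := pairwiseDisjoint_neighborFinset_lowDegreeVertices hsum
  have hTH : T ⊆ H := biUnion_subset.2 fun a ha => neighborFinset_subset_highDegreeVertices hsum ha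
  have hcardT : #T = ∑ a ∈ L, G.degree a := card_biUnion_neighborFinset_lowDegreeVertices hsum
  have hsumT : k * (∑ a ∈ L, G.degree a + #L) ≤ ∑ x ∈ T, G.degree x := by
    rw [sum_biUnion hdisj, card_eq_sum_ones, ← sum_add_distrib, mul_sum]
    exact sum_le_sum fun a ha => mul_degree_add_one_le_sum_degree_neighborFinset hsum (hdeg a) ha
  have hsumHT : (k + 1) * #(H \ T) ≤ ∑ x ∈ H \ T, G.degree x := by
    rw [mul_comm, ← smul_eq_mul]
    refine card_nsmul_le_sum _ _ _ fun x hx => ?_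
    simpa only [H, highDegreeVertices, mem_filter, mem_univ, true_and, Nat.succ_le_iff]
      using (mem_sdiff.1 hx).1
  have hsplitH := sum_sdiff hTH (f := fun x => G.degree x)
  have hcardH := card_sdiff_add_card_eq_card hTH
  have hsplitV := sum_lowDegreeVertices_add_sum_highDegreeVertices (G := G) k fun x => G.degree x
  have hcardV := card_lowDegreeVertices_add_card_highDegreeVertices (G := G) k
  rw [sum_degrees_eq_twice_card_edges] at hsplitV
  rw [← hcardV, ← hcardH, hcardT]
  linarith

end DegreeSum

end SimpleGraph

open SimpleGraph in
theorem stmt_9_general {V : Type*} [Fintype V] [DecidableEq V] (G : SimpleGraph V)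
    [DecidableRel G.Adj] (hconn : G.Connected) (hn : 2 ≤ Fintype.card V)
    (h : ℕ)
    (hm : G.edgeFinset.card ≤ 3 * (Fintype.card V + 2 * h - 2))
    (hbig : 24 * (h - 1) < Fintype.card V) :
    G.bondageNumber ≤ 11 := by
  by_contra! hb
  have hsum : ∀ u v w, u ≠ v → G.Adj u w → (G.Adj v w ∨ v = w) →
      2 * 6 < G.degree u + G.degree v := fun u v w huv huw hvw => by
    have := bondageNumber_le_degree_add_degree_sub_one huv huw hvw
    omega
  have : Nontrivial V := Fintype.one_lt_card_iff_nontrivial.1 hn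
  have hdeg : ∀ v, 0 < G.degree v := fun v => hconn.preconnected.degree_pos_of_nontrivial v
  have hedges := mul_card_add_card_highDegreeVertices_le hdeg hsum
  have hlow := card_lowDegreeVertices_le_card_highDegreeVertices hdeg hsum
  have hcard := card_lowDegreeVertices_add_card_highDegreeVertices (G := G) 6
  omega

theorem stmt_9 {V : Type*} [Fintype V] [DecidableEq V] (G : SimpleGraph V)
    [DecidableRel G.Adj] (hconn : G.Connected) (hn : 2 ≤ Fintype.card V)
    (h : ℕ) (hh : 1 ≤ h)
    (hm : G.edgeFinset.card ≤ 3 * (Fintype.card V + 2 * h - 2))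
    (hbig : 24 * (h - 1) < Fintype.card V) :
    G.bondageNumber ≤ 11 :=
  stmt_9_general G hconn hn h hm hbig
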